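/- arXiv:2506.10256 — 2 statements merged into one kernel-verified Lean document; each statement's English description precedes it below -/
import Mathlib

section
/- Let $(A_i)_{i\in\mathbb{Z}}$ be $d\times d$ real matrices with $\sum_{i=-\infty}^{\infty}\|A_i\| < \infty$. For $n\geq 1$ and $i\in\mathbb{Z}$ define $\gamma_{in} = \sum_{k=-i}^{n-i-1} A_k$. Then $\sum_{i=-\infty}^{-1} \|\gamma_{in}\| = o(n)$ and $\sum_{i=n}^{\infty} \|\gamma_{in}\| = o(n)$ as $n\to\infty$. -/
open Filter Topology

lemma sum_Icc_eq_range (f : ℤ → ℝ) (a : ℤ) (n : ℕ) :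
    ∑ k ∈ Finset.Icc a (a + n - 1), f k = ∑ m ∈ Finset.range n, f (a + m) := by
  have himg : Finset.Icc a (a + n - 1) = (Finset.range n).image (fun m : ℕ => a + (m : ℤ)) := by
    ext k
    simp only [Finset.mem_image, Finset.mem_range, Finset.mem_Icc]
    constructor
    · rintro ⟨hak, hk⟩
      exact ⟨(k - a).toNat, by omega, by omega⟩
    · rintro ⟨m, hm, rfl⟩; omega
  rw [himg, Finset.sum_image (by intro x _ y _ h; simp only at h; omega)]

lemma shift_summable (f : ℤ → ℝ) (hf : Summable f) (c : ℤ) :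
    Summable (fun i : ℕ => f ((i : ℤ) + c)) := by
  apply hf.comp_injective
  intro a b h
  have h' : (a : ℤ) + c = (b : ℤ) + c := h
  omega

lemma key (f : ℤ → ℝ) (hf : Summable f) :
    Tendsto (fun n : ℕ => (∑' i : ℕ, ∑ m ∈ Finset.range n, f ((i : ℤ) + 1 + m)) / n)
      atTop (𝓝 0) := by
  set g : ℕ → ℝ := fun k => f k with hg_def
  have t_eq : ∀ n : ℕ,
      (∑' i : ℕ, ∑ m ∈ Finset.range n, f ((i : ℤ) + 1 + m))
        = ∑ m ∈ Finset.range n, ∑' i : ℕ, g (i + (m + 1)) := by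
    intro n
    rw [Summable.tsum_finsetSum (fun m _ => by
      have := shift_summable f hf (1 + m)
      simpa [add_assoc] using this)]
    refine Finset.sum_congr rfl fun m _ => ?_
    refine tsum_congr fun i => ?_
    simp only [hg_def]
    congr 1
    push_cast
    ring
  have ht : Tendsto (fun m : ℕ => ∑' i : ℕ, g (i + (m + 1))) atTop (𝓝 0) :=
    (tendsto_sum_nat_add g).comp (tendsto_add_atTop_nat 1)
  have hc := ht.cesaro
  simp only [t_eq]
  refine hc.congr fun n => ?_
  rw [inv_mul_eq_div]

theorem stmt1 {d : ℕ}
    (A : ℤ → ((Fin d → ℝ) →L[ℝ] (Fin d → ℝ)))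
    (hA : Summable (fun i => ‖A i‖))
    (γ : ℤ → ℕ → ((Fin d → ℝ) →L[ℝ] (Fin d → ℝ)))
    (hγ : ∀ (i : ℤ) (n : ℕ), γ i n = ∑ k ∈ Finset.Icc (-i) ((n : ℤ) - i - 1), A k) :
    Tendsto (fun n : ℕ => (∑' i : ℕ, ‖γ (-(i : ℤ) - 1) n‖) / n) atTop (𝓝 0) ∧
    Tendsto (fun n : ℕ => (∑' i : ℕ, ‖γ ((n : ℤ) + i) n‖) / n) atTop (𝓝 0) := by
  set f : ℤ → ℝ := fun k => ‖A k‖ with hf_def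
  have hf : Summable f := hA
  have hmaj : ∀ (h : ℤ → ℝ), Summable h → ∀ n : ℕ,
      Summable (fun i : ℕ => ∑ m ∈ Finset.range n, h ((i : ℤ) + 1 + m)) := by
    intro h hh n
    apply summable_sum
    intro m _
    have := shift_summable h hh (1 + m)
    simpa [add_assoc] using this
  constructor
  · -- first part
    have hbound : ∀ (n : ℕ) (i : ℕ),
        ‖γ (-(i : ℤ) - 1) n‖ ≤ ∑ m ∈ Finset.range n, f ((i : ℤ) + 1 + m) := by
      intro n i
      rw [hγ]
      calc ‖∑ k ∈ Finset.Icc (-(-(i:ℤ)-1)) ((n:ℤ) - (-(i:ℤ)-1) - 1), A k‖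
          ≤ ∑ k ∈ Finset.Icc (-(-(i:ℤ)-1)) ((n:ℤ) - (-(i:ℤ)-1) - 1), f k :=
            norm_sum_le _ _
        _ = ∑ k ∈ Finset.Icc ((i:ℤ)+1) (((i:ℤ)+1) + n - 1), f k := by
            congr 1 <;> ring_nf
        _ = ∑ m ∈ Finset.range n, f ((i:ℤ) + 1 + m) := sum_Icc_eq_range f _ n
    refine squeeze_zero (g := fun n : ℕ =>
        (∑' i : ℕ, ∑ m ∈ Finset.range n, f ((i : ℤ) + 1 + m)) / n)
      (fun n => div_nonneg (tsum_nonneg fun i => norm_nonneg _) (Nat.cast_nonneg n))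
      (fun n => div_le_div_of_nonneg_right
        (Summable.tsum_le_tsum (hbound n)
          (Summable.of_nonneg_of_le (fun i => norm_nonneg _) (hbound n) (hmaj f hf n))
          (hmaj f hf n))
        (Nat.cast_nonneg n)) (key f hf)
  · -- second part
    set f' : ℤ → ℝ := fun j => f (-j) with hf'_def
    have hf' : Summable f' := hf.comp_injective neg_injective
    have hbound : ∀ (n : ℕ) (i : ℕ),
        ‖γ ((n : ℤ) + i) n‖ ≤ ∑ m ∈ Finset.range n, f' ((i : ℤ) + 1 + m) := by
      intro n i
      rw [hγ]
      have hneg : ∑ k ∈ Finset.Icc (-((n:ℤ) + i)) ((n:ℤ) - ((n:ℤ) + i) - 1), f k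
          = ∑ j ∈ Finset.Icc ((i:ℤ)+1) (((i:ℤ)+1) + n - 1), f' j := by
        rw [hf'_def]
        apply Finset.sum_nbij' (fun k => -k) (fun j => -j)
        · intro k hk; simp only [Finset.mem_Icc] at *; omega
        · intro j hj; simp only [Finset.mem_Icc] at *; omega
        · intro k _; ring
        · intro j _; ring
        · intro k _; rw [neg_neg]
      calc ‖∑ k ∈ Finset.Icc (-((n:ℤ) + i)) ((n:ℤ) - ((n:ℤ) + i) - 1), A k‖
          ≤ ∑ k ∈ Finset.Icc (-((n:ℤ) + i)) ((n:ℤ) - ((n:ℤ) + i) - 1), f k :=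
            norm_sum_le _ _
        _ = ∑ j ∈ Finset.Icc ((i:ℤ)+1) (((i:ℤ)+1) + n - 1), f' j := hneg
        _ = ∑ m ∈ Finset.range n, f' ((i:ℤ) + 1 + m) := sum_Icc_eq_range f' _ n
    refine squeeze_zero (g := fun n : ℕ =>
        (∑' i : ℕ, ∑ m ∈ Finset.range n, f' ((i : ℤ) + 1 + m)) / n)
      (fun n => div_nonneg (tsum_nonneg fun i => norm_nonneg _) (Nat.cast_nonneg n))
      (fun n => div_le_div_of_nonneg_right
        (Summable.tsum_le_tsum (hbound n)
          (Summable.of_nonneg_of_le (fun i => norm_nonneg _) (hbound n) (hmaj f' hf' n))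
          (hmaj f' hf' n))
        (Nat.cast_nonneg n)) (key f' hf')
end

section
/- (Prokhorov concentration inequality) Let $Y_1,\ldots,Y_m$ be independent real random variables with mean zero such that $P(|Y_i|\leq c) = 1$ for all $i$, for some $c>0$. Then for any $t>0$, $P(Y_1+\cdots+Y_m > t) \leq \left(\frac{ct}{\sum_{i=1}^m \mathrm{Var}(Y_i)}\right)^{-t/(2c)}$. -/
open Filter Topology MeasureTheory ProbabilityTheory

set_option maxHeartbeats 1000000
open Real

lemma exp_series_bound {a x : ℝ} (ha : 0 < a) (hx : |x| ≤ a) :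
    Real.exp x ≤ 1 + x + x ^ 2 / (2 * a) * Real.exp a := by
  have hexp : ∀ y : ℝ, Real.exp y = ∑' n : ℕ, y ^ n / (n.factorial : ℝ) := by
    intro y
    rw [Real.exp_eq_exp_ℝ, NormedSpace.exp_eq_tsum_div]
  have hsum : ∀ y : ℝ, Summable (fun n : ℕ => y ^ n / (n.factorial : ℝ)) := Real.summable_pow_div_factorial
  have hstrip : ∀ y : ℝ, Real.exp y = 1 + y + ∑' n : ℕ, y ^ (n + 2) / ((n+2).factorial : ℝ) := by
    intro y
    have h1 := Summable.tsum_eq_zero_add (hsum y)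
    have h2 := Summable.tsum_eq_zero_add ((summable_nat_add_iff 1).mpr (hsum y))
    rw [hexp y, h1]
    simp only [pow_zero, Nat.factorial_zero] at *
    rw [h2]
    simp [Nat.factorial]
    ring
  have hsum2 : Summable (fun n : ℕ => x ^ (n + 2) / ((n+2).factorial : ℝ)) :=
    (summable_nat_add_iff 2).mpr (hsum x)
  have hsuma : Summable (fun n : ℕ => a ^ (n + 1) / ((n+1).factorial : ℝ)) :=
    (summable_nat_add_iff 1).mpr (hsum a)
  have hterm : ∀ n : ℕ, x ^ (n + 2) / ((n+2).factorial : ℝ) ≤ x ^ 2 / (2 * a) * (a ^ (n + 1) / ((n+1).factorial : ℝ)) := by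
    intro n
    have h1 : x ^ (n + 2) ≤ x ^ 2 * a ^ n := by
      calc x ^ (n + 2) = x ^ 2 * x ^ n := by ring
        _ ≤ x ^ 2 * a ^ n := by
            have hxa : x ^ n ≤ a ^ n := by
              calc x ^ n ≤ |x ^ n| := le_abs_self _
                _ = |x| ^ n := abs_pow x n
                _ ≤ a ^ n := pow_le_pow_left₀ (abs_nonneg x) hx n
            nlinarith [sq_nonneg x]
    have h2 : (2 : ℝ) * ((n+1).factorial : ℝ) ≤ (((n+2).factorial : ℝ) : ℝ) := by
      have h3 : ((n+2).factorial : ℝ) = ((n:ℝ) + 2) * ((n+1).factorial : ℝ) := by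
        rw [Nat.factorial_succ]; push_cast; ring
      rw [h3]
      have h4 : (2 : ℝ) ≤ (n : ℝ) + 2 := by have := (n.cast_nonneg : (0:ℝ) ≤ n); linarith
      have h5 : (0:ℝ) < ((n+1).factorial : ℝ) := by positivity
      nlinarith
    calc x ^ (n + 2) / ((n+2).factorial : ℝ) ≤ (x ^ 2 * a ^ n) / ((n+2).factorial : ℝ) := by
          have : (0:ℝ) < ((n+2).factorial : ℝ) := by positivity
          gcongr
      _ ≤ (x ^ 2 * a ^ n) / (2 * ((n+1).factorial : ℝ)) := by
          have h6 : (0:ℝ) ≤ x ^ 2 * a ^ n := by positivity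
          have h7 : (0:ℝ) < 2 * ((n+1).factorial : ℝ) := by positivity
          gcongr
      _ = x ^ 2 / (2 * a) * (a ^ (n + 1) / ((n+1).factorial : ℝ)) := by
          field_simp
          ring
  have hsum3 : Summable (fun n : ℕ => x ^ 2 / (2 * a) * (a ^ (n + 1) / ((n+1).factorial : ℝ))) :=
    hsuma.mul_left _
  have hle : ∑' n : ℕ, x ^ (n + 2) / ((n+2).factorial : ℝ) ≤
      ∑' n : ℕ, x ^ 2 / (2 * a) * (a ^ (n + 1) / ((n+1).factorial : ℝ)) :=
    Summable.tsum_le_tsum hterm hsum2 hsum3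
  have heq : ∑' n : ℕ, x ^ 2 / (2 * a) * (a ^ (n + 1) / ((n+1).factorial : ℝ)) =
      x ^ 2 / (2 * a) * (Real.exp a - 1) := by
    rw [tsum_mul_left]
    congr 1
    have h1 := Summable.tsum_eq_zero_add (hsum a)
    rw [hexp a] at *
    simp only [pow_zero, Nat.factorial_zero, Nat.cast_one, div_one] at h1
    linarith
  rw [hstrip x]
  have : x ^ 2 / (2 * a) * (Real.exp a - 1) ≤ x ^ 2 / (2 * a) * Real.exp a := by
    have h1 : (0:ℝ) ≤ x ^ 2 / (2 * a) := by positivity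
    nlinarith [Real.exp_pos a]
  linarith [hle.trans (heq.le)]

theorem stmt2 {Ω : Type*} [MeasurableSpace Ω] (μ : Measure Ω) [IsProbabilityMeasure μ]
    {m : ℕ} (Y : Fin m → Ω → ℝ) (c t : ℝ) (hc : 0 < c) (ht : 0 < t)
    (hmeas : ∀ i, Measurable (Y i))
    (hindep : iIndepFun Y μ)
    (hint : ∀ i, Integrable (Y i) μ)
    (hmean : ∀ i, ∫ ω, Y i ω ∂μ = 0)
    (hbdd : ∀ i, ∀ᵐ ω ∂μ, |Y i ω| ≤ c)
    (hvar : 0 < ∑ i, variance (Y i) μ) :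
    (μ {ω | t < ∑ i, Y i ω}).toReal ≤
      (c * t / ∑ i, variance (Y i) μ) ^ (-(t / (2 * c))) := by
  set V := ∑ i, variance (Y i) μ with hV
  have hrpos : 0 < c * t / V := by positivity
  by_cases hr : c * t / V ≤ 1
  · have h1 : (μ {ω | t < ∑ i, Y i ω}).toReal ≤ 1 := by
      have h := prob_le_one (μ := μ) (s := {ω | t < ∑ i, Y i ω})
      simpa using ENNReal.toReal_mono (by simp) h
    have h2 : (1:ℝ) ≤ (c * t / V) ^ (-(t / (2 * c))) :=
      Real.one_le_rpow_of_pos_of_le_one_of_nonpos hrpos hr (by positivity |> neg_nonpos_of_nonneg)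
    linarith
  · push_neg at hr
    set r := c * t / V with hrdef
    set L := Real.log r / c with hLdef
    have hlog : 0 < Real.log r := Real.log_pos hr
    have hL0 : 0 < L := by positivity
    have hLc : L * c = Real.log r := div_mul_cancel₀ _ hc.ne'
    have hexpLc : Real.exp (L * c) = r := by rw [hLc, Real.exp_log hrpos]
    set K := L / (2 * c) * Real.exp (L * c) with hKdef
    have hK0 : 0 < K := by positivity
    -- Memℒp and integrability facts
    have hmem : ∀ i, MemLp (Y i) 2 μ := fun i =>
      MemLp.of_bound (hmeas i).aestronglyMeasurable c
        (by filter_upwards [hbdd i] with ω h using by rwa [Real.norm_eq_abs])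
    have hY2 : ∀ i, Integrable (fun ω => (Y i ω) ^ 2) μ := fun i => (hmem i).integrable_sq
    have hvar_eq : ∀ i, ∫ ω, (Y i ω) ^ 2 ∂μ = variance (Y i) μ := by
      intro i
      have h := variance_eq_sub (hmem i)
      rw [h, hmean i]
      norm_num
    have hintexp : ∀ i, Integrable (fun ω => Real.exp (L * Y i ω)) μ := by
      intro i
      refine Integrable.mono' (integrable_const (Real.exp (L * c)))
        ((hmeas i).const_mul L).exp.aestronglyMeasurable ?_
      filter_upwards [hbdd i] with ω h
      rw [Real.norm_eq_abs, abs_of_pos (Real.exp_pos _), Real.exp_le_exp]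
      have : Y i ω ≤ c := le_of_abs_le h
      nlinarith
    -- per-variable mgf bound
    have hmgf : ∀ i, mgf (Y i) μ L ≤ Real.exp (K * variance (Y i) μ) := by
      intro i
      have hptwise : ∀ᵐ ω ∂μ, Real.exp (L * Y i ω) ≤
          1 + L * Y i ω + K * (Y i ω) ^ 2 := by
        filter_upwards [hbdd i] with ω h
        have hxa : |L * Y i ω| ≤ L * c := by
          rw [abs_mul, abs_of_pos hL0]
          exact mul_le_mul_of_nonneg_left h hL0.le
        have := exp_series_bound (by positivity : (0:ℝ) < L * c) hxa
        have heq : (L * Y i ω) ^ 2 / (2 * (L * c)) * Real.exp (L * c)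
            = K * (Y i ω) ^ 2 := by
          rw [hKdef]; field_simp
        linarith [heq ▸ this]
      have hrhsint : Integrable (fun ω => 1 + L * Y i ω + K * (Y i ω) ^ 2) μ :=
        ((integrable_const 1).add ((hint i).const_mul L)).add ((hY2 i).const_mul K)
      have h1 : mgf (Y i) μ L ≤ ∫ ω, (1 + L * Y i ω + K * (Y i ω) ^ 2) ∂μ :=
        integral_mono_ae (hintexp i) hrhsint hptwise
      have h2 : ∫ ω, (1 + L * Y i ω + K * (Y i ω) ^ 2) ∂μ
          = 1 + K * variance (Y i) μ := by
        have i1 : Integrable (fun ω => 1 + L * Y i ω) μ :=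
          (integrable_const 1).add ((hint i).const_mul L)
        have e1 : ∫ ω, (1 + L * Y i ω + K * Y i ω ^ 2) ∂μ
            = (∫ ω, (1 + L * Y i ω) ∂μ) + ∫ ω, K * Y i ω ^ 2 ∂μ :=
          integral_add i1 ((hY2 i).const_mul K)
        have e2 : ∫ ω, (1 + L * Y i ω) ∂μ
            = (∫ ω, (1:ℝ) ∂μ) + ∫ ω, L * Y i ω ∂μ :=
          integral_add (integrable_const 1) ((hint i).const_mul L)
        rw [e1, e2, integral_const, integral_const_mul, integral_const_mul, hmean i,
          hvar_eq i]
        simp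
      calc mgf (Y i) μ L ≤ 1 + K * variance (Y i) μ := h2 ▸ h1
        _ ≤ Real.exp (K * variance (Y i) μ) := by
            linarith [Real.add_one_le_exp (K * variance (Y i) μ)]
    -- Chernoff
    have hintS : Integrable (fun ω => Real.exp (L * (∑ i, Y i) ω)) μ :=
      hindep.integrable_exp_mul_sum hmeas (fun i _ => hintexp i)
    have hchern := measure_ge_le_exp_mul_mgf (μ := μ) (X := ∑ i, Y i) (t := L) t hL0.le hintS
    have hsub : μ {ω | t < ∑ i, Y i ω} ≤ μ {ω | t ≤ (∑ i, Y i) ω} := by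
      apply measure_mono
      intro ω hω
      simp only [Set.mem_setOf_eq, Finset.sum_apply] at *
      exact hω.le
    have hmgfS : mgf (∑ i, Y i) μ L = ∏ i, mgf (Y i) μ L :=
      hindep.mgf_sum hmeas Finset.univ
    have hprod : ∏ i, mgf (Y i) μ L ≤ Real.exp (K * V) := by
      calc ∏ i, mgf (Y i) μ L ≤ ∏ i, Real.exp (K * variance (Y i) μ) :=
            Finset.prod_le_prod (fun i _ => mgf_nonneg) (fun i _ => hmgf i)
        _ = Real.exp (∑ i, K * variance (Y i) μ) := (Real.exp_sum _ _).symm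
        _ = Real.exp (K * V) := by rw [← Finset.mul_sum]
    have hVpos : 0 < V := hvar
    have hrV : r * V = c * t := by rw [hrdef]; field_simp
    have hKV : K * V = L * t / 2 := by
      rw [hKdef, hexpLc]
      field_simp
      nlinarith [hrV]
    have hfinal : Real.exp (-L * t) * Real.exp (K * V) = r ^ (-(t / (2 * c))) := by
      rw [← Real.exp_add, hKV, Real.rpow_def_of_pos hrpos]
      congr 1
      rw [hLdef]
      field_simp
      ring
    calc (μ {ω | t < ∑ i, Y i ω}).toReal
        ≤ (μ {ω | t ≤ (∑ i, Y i) ω}).toReal :=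
          ENNReal.toReal_mono (measure_ne_top _ _) hsub
      _ ≤ Real.exp (-L * t) * mgf (∑ i, Y i) μ L := hchern
      _ ≤ Real.exp (-L * t) * Real.exp (K * V) := by
          rw [hmgfS]
          exact mul_le_mul_of_nonneg_left hprod (Real.exp_pos _).le
      _ = r ^ (-(t / (2 * c))) := hfinal
end
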